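/- Let F be a field, d >= 1, and work in the free associative F-algebra on 2d generators y_1,...,y_d, z_1,...,z_d. Let HARD_d be the noncommutative polynomial that is the sum, over all subsets S of {1,...,d}, of the word formed by the product of the y_i for i in S in increasing order of i, followed by the product of the z_j for j in the complement of S in increasing order of j. For 0 <= k <= d, let M_k(HARD_d) be the matrix whose rows are indexed by words of length k over the 2d generators, whose columns are indexed by words of length d - k over the 2d generators, and whose entry at row u and column v is the coefficient in HARD_d of the concatenated word u*v. Then for every 0 <= k <= d, the rank of M_k(HARD_d) over F is at least the binomial coefficient C(d,k). -/

import Mathlib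

/-- The coefficient of a noncommutative polynomial (element of the free associative algebra)
at a word, via the identification with the monoid algebra of the free monoid. -/
noncomputable def ncCoeff {F : Type*} [CommSemiring F] {X : Type*}
    (x : FreeAlgebra F X) (w : FreeMonoid X) : F :=
  (FreeAlgebra.equivMonoidAlgebraFreeMonoid x).coeff w

/-- Nisan's hard polynomial `HARD_d`: the ordered representative of `∏ i, (y_i + z_i)`,
i.e. the sum over all subsets `S ⊆ {1,…,d}` of the product of the `y_i, i ∈ S` in
increasing order followed by the product of the `z_j, j ∈ Sᶜ` in increasing order
(with `y` the left copy and `z` the right copy of `Fin d`). -/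
noncomputable def HARD (F : Type*) [Field F] (d : ℕ) : FreeAlgebra F (Fin d ⊕ Fin d) :=
  ∑ S : Finset (Fin d),
    ((S.sort (· ≤ ·)).map (fun i => FreeAlgebra.ι F (Sum.inl i : Fin d ⊕ Fin d))).prod *
      ((Sᶜ.sort (· ≤ ·)).map (fun j => FreeAlgebra.ι F (Sum.inr j : Fin d ⊕ Fin d))).prod

/-- Nisan's partial derivatives matrix `M_k(HARD_d)`: rows indexed by words of length `k`
over the `2d` generators, columns by words of length `d - k`, with `(u,v)` entry the
coefficient of the concatenated word `u * v` in `HARD_d`. -/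
noncomputable def nisanMatrix (F : Type*) [Field F] (d k : ℕ) :
    Matrix (List.Vector (Fin d ⊕ Fin d) k) (List.Vector (Fin d ⊕ Fin d) (d - k)) F :=
  fun u v => ncCoeff (HARD F d) (FreeMonoid.ofList u.toList * FreeMonoid.ofList v.toList)

/-!
Write `y_A` for the increasing product of the `y_i, i ∈ A`, and `z_B` likewise. The monomials of
`HARD_d` are the words `y_S z_{Sᶜ}`, and such a word determines `S` through its `y`-letters. Hence
the entry of `M_k(HARD_d)` at row `y_A` and column `z_{Bᶜ}`, for `#A = #B = k`, is `1` if `A = B`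
and `0` otherwise: `M_k(HARD_d)` contains an identity submatrix of size `C(d,k)`.
-/

open Finset

theorem List.map_inl_append_map_inr_inj {α β : Type*} {l₁ l₃ : List α} {l₂ l₄ : List β} :
    l₁.map Sum.inl ++ l₂.map Sum.inr = l₃.map Sum.inl ++ l₄.map Sum.inr ↔
      l₁ = l₃ ∧ l₂ = l₄ := by
  refine ⟨fun h => ⟨?_, ?_⟩, fun ⟨h₁, h₂⟩ => h₁ ▸ h₂ ▸ rfl⟩
  · simpa [List.filterMap_append, List.filterMap_map, Function.comp_def] using
      congrArg (List.filterMap Sum.getLeft?) h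
  · simpa [List.filterMap_append, List.filterMap_map, Function.comp_def] using
      congrArg (List.filterMap Sum.getRight?) h

theorem Finset.sort_injective {α : Type*} [LinearOrder α] :
    Function.Injective (fun s : Finset α => s.sort (· ≤ ·)) := fun s t h => by
  simpa only [Finset.sort_toFinset] using congrArg List.toFinset h

namespace FreeAlgebra

variable {R X : Type*} [CommSemiring R]

theorem equivMonoidAlgebraFreeMonoid_ι (x : X) :
    equivMonoidAlgebraFreeMonoid (ι R x) = MonoidAlgebra.single (FreeMonoid.of x) 1 := by
  simp [equivMonoidAlgebraFreeMonoid]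

theorem equivMonoidAlgebraFreeMonoid_prod_map_ι (l : List X) :
    equivMonoidAlgebraFreeMonoid (l.map (ι R)).prod =
      MonoidAlgebra.single (FreeMonoid.ofList l) 1 := by
  induction l with
  | nil => rw [List.map_nil, List.prod_nil, map_one]; rfl
  | cons a l ih =>
    simp only [List.map_cons, List.prod_cons, map_mul, ih, equivMonoidAlgebraFreeMonoid_ι,
      MonoidAlgebra.single_mul_single, one_mul, FreeMonoid.ofList_cons]

end FreeAlgebra

section ncCoeff

variable {R X : Type*} [CommSemiring R]

theorem ncCoeff_sum {ι : Type*} (s : Finset ι) (f : ι → FreeAlgebra R X) (w : FreeMonoid X) :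
    ncCoeff (∑ i ∈ s, f i) w = ∑ i ∈ s, ncCoeff (f i) w := by
  simp [ncCoeff, Finsupp.finsetSum_apply]

open scoped Classical in
theorem ncCoeff_prod_map_ι (l : List X) (w : FreeMonoid X) :
    ncCoeff ((l.map (FreeAlgebra.ι R)).prod) w = if FreeMonoid.ofList l = w then 1 else 0 := by
  simp [ncCoeff, FreeAlgebra.equivMonoidAlgebraFreeMonoid_prod_map_ι, Finsupp.single_apply]

end ncCoeff

namespace Nisan

variable (F : Type*) [Field F] {d k : ℕ}

def yWord (S : Finset (Fin d)) : List (Fin d ⊕ Fin d) := (S.sort (· ≤ ·)).map Sum.inl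

def zWord (S : Finset (Fin d)) : List (Fin d ⊕ Fin d) := (S.sort (· ≤ ·)).map Sum.inr

theorem yWord_append_zWord_inj {S T S' T' : Finset (Fin d)} :
    yWord S ++ zWord T = yWord S' ++ zWord T' ↔ S = S' ∧ T = T' := by
  simp only [yWord, zWord, List.map_inl_append_map_inr_inj, Finset.sort_injective.eq_iff]

theorem HARD_eq_sum :
    HARD F d = ∑ S : Finset (Fin d), ((yWord S ++ zWord Sᶜ).map (FreeAlgebra.ι F)).prod := by
  simp only [HARD, yWord, zWord, List.map_append, List.prod_append, List.map_map]
  rfl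

theorem ncCoeff_HARD_yWord_append_zWord (S T : Finset (Fin d)) :
    ncCoeff (HARD F d) (FreeMonoid.ofList (yWord S ++ zWord T)) = if Sᶜ = T then 1 else 0 := by
  simp only [HARD_eq_sum, ncCoeff_sum, ncCoeff_prod_map_ι, FreeMonoid.ofList.apply_eq_iff_eq,
    yWord_append_zWord_inj, ite_and, Finset.sum_ite_eq', Finset.mem_univ, if_true]

def yVec (S : {S : Finset (Fin d) // #S = k}) : List.Vector (Fin d ⊕ Fin d) k :=
  ⟨yWord S.1, by simp [yWord, S.2]⟩

def zVec (S : {S : Finset (Fin d) // #S = k}) : List.Vector (Fin d ⊕ Fin d) (d - k) :=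
  ⟨zWord S.1ᶜ, by simp [zWord, card_compl, S.2]⟩

theorem nisanMatrix_submatrix_yVec_zVec :
    (nisanMatrix F d k).submatrix yVec zVec = 1 := by
  ext A B
  simp only [Matrix.submatrix_apply, nisanMatrix, yVec, zVec, List.Vector.toList_mk,
    ← FreeMonoid.ofList_append, ncCoeff_HARD_yWord_append_zWord, compl_inj_iff,
    Matrix.one_apply, Subtype.ext_iff]

end Nisan

theorem nisanMatrix_rank_ge_general (F : Type*) [Field F] (d : ℕ)
    (k : ℕ) :
    d.choose k ≤ (nisanMatrix F d k).rank :=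
  calc d.choose k = (1 : Matrix {S : Finset (Fin d) // #S = k} _ F).rank := by
        rw [Matrix.rank_one, Fintype.card_finset_len, Fintype.card_fin]
    _ = ((nisanMatrix F d k).submatrix Nisan.yVec Nisan.zVec).rank := by
        rw [Nisan.nisanMatrix_submatrix_yVec_zVec F]
    _ ≤ (nisanMatrix F d k).rank := Matrix.rank_submatrix_le _ _ _

/-- For every `0 ≤ k ≤ d`, the rank over `F` of Nisan's matrix `M_k(HARD_d)` is at least
the binomial coefficient `C(d,k)`. -/
theorem nisanMatrix_rank_ge (F : Type*) [Field F] (d : ℕ) (hd : 1 ≤ d)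
    (k : ℕ) (hk : k ≤ d) :
    d.choose k ≤ (nisanMatrix F d k).rank :=
  nisanMatrix_rank_ge_general F d k
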